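/- arXiv:2210.05607 — 2 statements merged into one kernel-verified Lean document; each statement's English description precedes it below -/
import Mathlib

section
/- For every fixed batch size b ≥ 1 there exists N*_b such that for every N > N*_b there exist N differentiable strongly convex loss functions f₁, …, f_N on ℝ (explicitly, with δ = δ_{N,b} > δ* the unique solution of (1+δ)/(1+δ⁴) = b/N, take f_n(w) = w²/(2δ) − w for n = 1,…,N−1 and f_N(w) = w²/(2δ) + (bδ⁴ + b − 1)w) such that mini-batch ADAM with batch size b applied to this problem diverges in expectation for every initial point w₁: E[F(w_t)] does not converge to min_w F(w), where F = (1/N)∑_{n=1}^N f_n. -/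
/-!
ADAM without `ε` normalises its steps: `|w_{t+1} - w_t| = α |g_t| / √v_t ≤ α / √(1 - β₂)`.
So the iterates drift at most linearly, which keeps `v_t` bounded as long as the iterate is near
the minimiser `-δ²` of `F`. Near `-δ²` every mini-batch gradient `w / δ + σ` (with `σ = δ⁴` if the
batch contains `f_N` and `σ = -1` otherwise) has modulus at least `1`, so every step taken there
has length at least some fixed `S > 0`, and no two consecutive iterates lie within `S / 3` of
`-δ²`, whatever the batches. Hence `F(w_t) + F(w_{t+1}) ≥ 2 min F + ε` pointwise, and `E[F(w_t)]`
cannot converge to `min F`.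
-/

open MeasureTheory Filter

structure IsAdamRun (α β : ℝ) (g w v : ℕ → ℝ) : Prop where
  v_zero : v 0 = 0
  v_succ : ∀ t, 1 ≤ t → v t = β * v (t - 1) + (1 - β) * g t ^ 2
  w_succ : ∀ t, 1 ≤ t → w (t + 1) = w t - α * g t / √(v t)

theorem ema_eq_sum {R : Type*} [CommRing R] {β : R} {u v : ℕ → R} (h0 : v 0 = 0)
    (hsucc : ∀ t, 1 ≤ t → v t = β * v (t - 1) + (1 - β) * u t) (t : ℕ) :
    v t = (1 - β) * ∑ k ∈ Finset.range t, β ^ k * u (t - k) := by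
  induction t with
  | zero => simpa using h0
  | succ t ih =>
    have hshift : ∑ k ∈ Finset.range t, β ^ (k + 1) * u (t + 1 - (k + 1))
        = β * ∑ k ∈ Finset.range t, β ^ k * u (t - k) := by
      rw [Finset.mul_sum]
      exact Finset.sum_congr rfl fun k _ => by rw [Nat.add_sub_add_right, pow_succ]; ring
    rw [hsucc (t + 1) (Nat.le_add_left 1 t), Nat.add_sub_cancel, ih, Finset.sum_range_succ',
      hshift, Nat.sub_zero]
    ring

theorem summable_pow_mul_add_mul_sq {β : ℝ} (hβ0 : 0 ≤ β) (hβ1 : β < 1) (A D : ℝ) :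
    Summable fun k : ℕ => β ^ k * (A + D * k) ^ 2 := by
  have hβ : ‖β‖ < 1 := by rwa [Real.norm_eq_abs, abs_of_nonneg hβ0]
  have h0 : Summable fun k : ℕ => (k : ℝ) ^ 0 * β ^ k :=
    summable_pow_mul_geometric_of_norm_lt_one 0 hβ
  have h1 : Summable fun k : ℕ => (k : ℝ) ^ 1 * β ^ k :=
    summable_pow_mul_geometric_of_norm_lt_one 1 hβ
  have h2 : Summable fun k : ℕ => (k : ℝ) ^ 2 * β ^ k :=
    summable_pow_mul_geometric_of_norm_lt_one 2 hβ
  refine (((h0.mul_left (A ^ 2)).add (h1.mul_left (2 * A * D))).add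
    (h2.mul_left (D ^ 2))).congr fun k => ?_
  ring

namespace IsAdamRun

variable {α β : ℝ} {g w v : ℕ → ℝ}

theorem v_nonneg (h : IsAdamRun α β g w v) (hβ0 : 0 ≤ β) (hβ1 : β ≤ 1) (t : ℕ) : 0 ≤ v t := by
  induction t with
  | zero => exact h.v_zero.ge
  | succ t ih =>
    rw [h.v_succ (t + 1) (Nat.le_add_left 1 t), Nat.add_sub_cancel]
    have : 0 ≤ 1 - β := sub_nonneg.2 hβ1
    positivity

theorem sqrt_one_sub_mul_abs_le (h : IsAdamRun α β g w v) (hβ0 : 0 ≤ β) (hβ1 : β ≤ 1)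
    {t : ℕ} (ht : 1 ≤ t) : √(1 - β) * |g t| ≤ √(v t) := by
  rw [← Real.sqrt_sq_eq_abs, ← Real.sqrt_mul (sub_nonneg.2 hβ1), h.v_succ t ht]
  exact Real.sqrt_le_sqrt (le_add_of_nonneg_left (mul_nonneg hβ0 (h.v_nonneg hβ0 hβ1 _)))

theorem abs_sub_eq (h : IsAdamRun α β g w v) (hα : 0 ≤ α) {t : ℕ} (ht : 1 ≤ t) :
    |w (t + 1) - w t| = α * |g t| / √(v t) := by
  rw [h.w_succ t ht, sub_sub_cancel_left, abs_neg, abs_div, abs_mul, abs_of_nonneg hα,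
    abs_of_nonneg (Real.sqrt_nonneg _)]

theorem abs_sub_le (h : IsAdamRun α β g w v) (hα : 0 ≤ α) (hβ0 : 0 ≤ β) (hβ1 : β < 1)
    {t : ℕ} (ht : 1 ≤ t) : |w (t + 1) - w t| ≤ α / √(1 - β) := by
  have hs : 0 < √(1 - β) := Real.sqrt_pos.2 (sub_pos.2 hβ1)
  rw [h.abs_sub_eq hα ht]
  rcases (Real.sqrt_nonneg (v t)).eq_or_lt with hv | hv
  · rw [← hv, div_zero]; positivity
  · rw [div_le_div_iff₀ hv hs, mul_assoc]
    exact mul_le_mul_of_nonneg_left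
      (by linarith [h.sqrt_one_sub_mul_abs_le hβ0 hβ1.le ht]) hα

theorem abs_sub_le_mul (h : IsAdamRun α β g w v) (hα : 0 ≤ α) (hβ0 : 0 ≤ β) (hβ1 : β < 1)
    {s : ℕ} (hs : 1 ≤ s) (k : ℕ) : |w (s + k) - w s| ≤ k * (α / √(1 - β)) := by
  have := dist_le_Ico_sum_of_dist_le (f := w) (d := fun _ => α / √(1 - β))
    (Nat.le_add_right s k) fun {j} hj _ => by
      rw [Real.dist_eq, abs_sub_comm]; exact h.abs_sub_le hα hβ0 hβ1 (hs.trans hj)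
  simpa [Real.dist_eq, abs_sub_comm] using this

theorem v_le_tsum (h : IsAdamRun α β g w v) (hβ0 : 0 ≤ β) (hβ1 : β ≤ 1) {G : ℕ → ℝ}
    (hG0 : ∀ k, 0 ≤ G k) (hGs : Summable fun k => β ^ k * G k) {t : ℕ}
    (hG : ∀ k < t, g (t - k) ^ 2 ≤ G k) : v t ≤ (1 - β) * ∑' k, β ^ k * G k := by
  rw [ema_eq_sum (u := fun t => g t ^ 2) h.v_zero h.v_succ t]
  refine mul_le_mul_of_nonneg_left ?_ (sub_nonneg.2 hβ1)
  refine (Finset.sum_le_sum fun k hk => ?_).trans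
    (hGs.sum_le_tsum _ fun k _ => mul_nonneg (pow_nonneg hβ0 k) (hG0 k))
  exact mul_le_mul_of_nonneg_left (hG k (Finset.mem_range.1 hk)) (pow_nonneg hβ0 k)

theorem div_sqrt_le_abs_sub (h : IsAdamRun α β g w v) (hα : 0 ≤ α) (hβ0 : 0 ≤ β) (hβ1 : β < 1)
    {t : ℕ} (ht : 1 ≤ t) {V : ℝ} (hV : v t ≤ V) : α * |g t| / √V ≤ |w (t + 1) - w t| := by
  rw [h.abs_sub_eq hα ht]
  rcases eq_or_ne (g t) 0 with hg | hg
  · simp [hg]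
  have hv : 0 < √(v t) := lt_of_lt_of_le (mul_pos (Real.sqrt_pos.2 (sub_pos.2 hβ1)) (abs_pos.2 hg))
    (h.sqrt_one_sub_mul_abs_le hβ0 hβ1.le ht)
  exact div_le_div_of_nonneg_left (by positivity) hv (Real.sqrt_le_sqrt hV)

end IsAdamRun

theorem exists_adam_escape_radius {α β : ℝ} (hα : 0 < α) (hβ0 : 0 ≤ β) (hβ1 : β < 1)
    {L M m r : ℝ} (hL : 0 ≤ L) (hM : 0 < M) (hm : 0 < m) (hr : 0 < r) (x : ℝ) :
    ∃ c > 0, ∀ g w v : ℕ → ℝ, IsAdamRun α β g w v → (∀ t, |g t| ≤ L * |w t - x| + M) →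
      (∀ t, |w t - x| ≤ r → m ≤ |g t|) → ∀ t, 1 ≤ t → c ≤ |w t - x| ∨ c ≤ |w (t + 1) - x| := by
  set C := α / √(1 - β)
  set A := L * r + M
  have hs := summable_pow_mul_add_mul_sq hβ0 hβ1 A (L * C)
  set V := (1 - β) * ∑' k : ℕ, β ^ k * (A + L * C * k) ^ 2
  have hV : 0 < V := mul_pos (sub_pos.2 hβ1)
    (hs.tsum_pos (fun k => by positivity) 0
      (by simp only [pow_zero, CharP.cast_eq_zero]; positivity))
  refine ⟨min r (α * m / √V / 3), by positivity, fun g w v h hgle hgge t ht => ?_⟩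
  by_contra! hnear
  have hwt : |w t - x| ≤ r := hnear.1.le.trans (min_le_left _ _)
  -- Steps have length at most `C`, so `k` steps back the iterate is within `r + k * C` of `x`.
  have hhist : ∀ k < t, g (t - k) ^ 2 ≤ (A + L * C * k) ^ 2 := by
    intro k hk
    have hdrift := h.abs_sub_le_mul hα.le hβ0 hβ1 (s := t - k) (by omega) k
    rw [Nat.sub_add_cancel hk.le] at hdrift
    have hwk : |w (t - k) - x| ≤ r + k * C := by
      linarith [abs_sub_le (w (t - k)) (w t) x, abs_sub_comm (w (t - k)) (w t)]
    rw [← sq_abs]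
    refine pow_le_pow_left₀ (abs_nonneg _) ?_ 2
    nlinarith [hgle (t - k)]
  have hstep := h.div_sqrt_le_abs_sub (V := V) hα.le hβ0 hβ1 ht
    (h.v_le_tsum hβ0 hβ1.le (fun k => sq_nonneg _) hs hhist)
  have hgt : α * m / √V ≤ α * |g t| / √V := by gcongr; exact hgge t hwt
  have hS : 0 < α * m / √V := by positivity
  linarith [abs_sub_le (w (t + 1)) x (w t), abs_sub_comm (w t) x,
    hnear.1.trans_le (min_le_right _ _), hnear.2.trans_le (min_le_right _ _)]

theorem exists_two_lt_div_eq {q : ℝ} (hq0 : 0 < q) (hq : q < 3 / 17) :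
    ∃ δ : ℝ, 2 < δ ∧ (1 + δ) / (1 + δ ^ 4) = q := by
  set X := 1 / q + 2
  have hqX : 1 ≤ q * X := by
    rw [mul_add, mul_one_div_cancel hq0.ne']; linarith
  have hfX : (1 + X) / (1 + X ^ 4) ≤ q := by
    rw [div_le_iff₀ (by positivity)]
    nlinarith [mul_le_mul_of_nonneg_right hqX (by positivity : (0 : ℝ) ≤ X ^ 3),
      mul_nonneg (by positivity : (0 : ℝ) ≤ 1 / q) (by positivity : (0 : ℝ) ≤ 1 / q + 4)]
  have hcont : Continuous fun x : ℝ => (1 + x) / (1 + x ^ 4) :=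
    (continuous_const.add continuous_id).div (continuous_const.add (continuous_pow 4))
      fun x => (by positivity : (0 : ℝ) < 1 + x ^ 4).ne'
  obtain ⟨δ, ⟨h2δ, -⟩, hδ⟩ := intermediate_value_Icc'
    (le_add_of_nonneg_left (one_div_pos.2 hq0).le : (2 : ℝ) ≤ X) hcont.continuousOn
    ⟨hfX, by norm_num; exact hq.le⟩
  refine ⟨δ, h2δ.lt_of_ne ?_, hδ⟩
  rintro rfl
  norm_num at hδ
  linarith

theorem not_tendsto_integral_of_add_succ_ge {Ω : Type*} [MeasurableSpace Ω] {μ : Measure Ω}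
    [IsProbabilityMeasure μ] {X : ℕ → Ω → ℝ} {m ε : ℝ} (hm : m ≠ 0) (hε : 0 < ε)
    (h : ∀ᶠ t in atTop, ∀ ω, 2 * m + ε ≤ X t ω + X (t + 1) ω) :
    ¬Tendsto (fun t => ∫ ω, X t ω ∂μ) atTop (nhds m) := by
  intro hT
  -- `m ≠ 0` rules out the junk value `0` of the integral of a non-integrable function.
  have hint : ∀ᶠ t in atTop, Integrable (X t) μ :=
    (hT.eventually_ne hm).mono fun t ht => Integrable.of_integral_ne_zero ht
  have hpair : ∀ᶠ t in atTop, 2 * m + ε ≤ (∫ ω, X t ω ∂μ) + ∫ ω, X (t + 1) ω ∂μ := by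
    filter_upwards [h, hint, (tendsto_add_atTop_nat 1).eventually hint] with t hX hi hi'
    rw [← integral_add hi hi']
    simpa using integral_mono (integrable_const (2 * m + ε)) (hi.add hi') hX
  have := ge_of_tendsto (hT.add (hT.comp (tendsto_add_atTop_nat 1))) hpair
  linarith

noncomputable def quadLoss (δ c x : ℝ) : ℝ := x ^ 2 / (2 * δ) + c * x

theorem hasDerivAt_quadLoss (δ c x : ℝ) : HasDerivAt (quadLoss δ c) (x / δ + c) x := by
  refine (((hasDerivAt_pow 2 x).div_const (2 * δ)).add
    ((hasDerivAt_id' x).const_mul c)).congr_deriv ?_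
  norm_num [mul_div_mul_left]

theorem differentiable_quadLoss (δ c : ℝ) : Differentiable ℝ (quadLoss δ c) :=
  fun x => (hasDerivAt_quadLoss δ c x).differentiableAt

theorem strongConvexOn_quadLoss {δ : ℝ} (hδ : 0 < δ) (c : ℝ) :
    StrongConvexOn Set.univ δ⁻¹ (quadLoss δ c) := by
  rw [strongConvexOn_iff_convex]
  have hlin : (fun x : ℝ => quadLoss δ c x - δ⁻¹ / 2 * ‖x‖ ^ 2)
      = ⇑(c • LinearMap.id (R := ℝ) (M := ℝ)) := by
    funext x
    simp only [quadLoss, LinearMap.smul_apply, LinearMap.id_coe, id_eq, smul_eq_mul,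
      Real.norm_eq_abs, sq_abs]
    field_simp
    ring
  rw [hlin]
  exact (c • LinearMap.id (R := ℝ) (M := ℝ)).convexOn convex_univ

theorem quadLoss_eq {δ : ℝ} (hδ : δ ≠ 0) (c x : ℝ) :
    quadLoss δ c x = (x + c * δ) ^ 2 / (2 * δ) - c ^ 2 * δ / 2 := by
  unfold quadLoss
  field_simp
  ring

theorem isLeast_range_quadLoss {δ : ℝ} (hδ : 0 < δ) (c : ℝ) :
    IsLeast (Set.range (quadLoss δ c)) (-(c ^ 2 * δ / 2)) := by
  refine ⟨⟨-(c * δ), by rw [quadLoss_eq hδ.ne']; ring⟩, ?_⟩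
  rintro _ ⟨x, rfl⟩
  rw [quadLoss_eq hδ.ne']
  linarith [div_nonneg (sq_nonneg (x + c * δ)) (by positivity : (0 : ℝ) ≤ 2 * δ)]

theorem quadLoss_add_quadLoss_ge {δ : ℝ} (hδ : 0 < δ) (c : ℝ) {ρ y z : ℝ} (hρ : 0 ≤ ρ)
    (h : ρ ≤ |y + c * δ| ∨ ρ ≤ |z + c * δ|) :
    2 * -(c ^ 2 * δ / 2) + ρ ^ 2 / (2 * δ) ≤ quadLoss δ c y + quadLoss δ c z := by
  have hsq : ∀ u, ρ ≤ |u| → ρ ^ 2 / (2 * δ) ≤ u ^ 2 / (2 * δ) := fun u hu => by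
    rw [← sq_abs u]
    exact div_le_div_of_nonneg_right (pow_le_pow_left₀ hρ hu 2) (by positivity)
  have hy := div_nonneg (sq_nonneg (y + c * δ)) (by positivity : (0 : ℝ) ≤ 2 * δ)
  have hz := div_nonneg (sq_nonneg (z + c * δ)) (by positivity : (0 : ℝ) ≤ 2 * δ)
  rw [quadLoss_eq hδ.ne', quadLoss_eq hδ.ne']
  rcases h with h | h <;> linarith [hsq _ h]

theorem mean_quadLoss {ι : Type*} {s : Finset ι} (hs : s.Nonempty) (δ : ℝ) (c : ι → ℝ)
    (x : ℝ) :
    (1 / (s.card : ℝ)) * ∑ n ∈ s, quadLoss δ (c n) x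
      = quadLoss δ ((1 / (s.card : ℝ)) * ∑ n ∈ s, c n) x := by
  have : (s.card : ℝ) ≠ 0 := by exact_mod_cast hs.card_pos.ne'
  simp only [quadLoss, Finset.sum_add_distrib, Finset.sum_const, nsmul_eq_mul,
    ← Finset.sum_mul]
  field_simp

noncomputable def divergentCoeff (b : ℕ) (δ : ℝ) {N : ℕ} (n : Fin (N + 1)) : ℝ :=
  if n = Fin.last N then b * δ ^ 4 + b - 1 else -1

theorem sum_divergentCoeff (b : ℕ) (δ : ℝ) {N : ℕ} (s : Finset (Fin (N + 1))) :
    ∑ n ∈ s, divergentCoeff b δ n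
      = (if Fin.last N ∈ s then b * δ ^ 4 + b else 0) - s.card := by
  have hc : ∀ n, divergentCoeff b δ n = (if n = Fin.last N then b * δ ^ 4 + b else 0) - 1 := by
    intro n; unfold divergentCoeff; split_ifs <;> ring
  simp [Finset.sum_congr rfl fun n _ => hc n, Finset.sum_sub_distrib, Finset.sum_ite_eq']

theorem mean_divergentCoeff {b : ℕ} (hb : b ≠ 0) (δ : ℝ) {N : ℕ} {s : Finset (Fin (N + 1))}
    (hs : s.card = b) :
    (1 / (b : ℝ)) * ∑ n ∈ s, divergentCoeff b δ n = if Fin.last N ∈ s then δ ^ 4 else -1 := by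
  rw [sum_divergentCoeff, hs]
  have : (b : ℝ) ≠ 0 := by exact_mod_cast hb
  split_ifs <;> field_simp <;> ring

theorem mean_divergentCoeff_univ {b N : ℕ} {δ : ℝ}
    (hrel : ((N + 1 : ℕ) : ℝ) * (1 + δ) = b * (1 + δ ^ 4)) :
    (1 / ((N + 1 : ℕ) : ℝ)) * ∑ n : Fin (N + 1), divergentCoeff b δ n = δ := by
  rw [sum_divergentCoeff, if_pos (Finset.mem_univ _), Finset.card_univ, Fintype.card_fin]
  field_simp
  linarith

theorem deriv_mean_quadLoss_divergentCoeff {b : ℕ} (hb : b ≠ 0) (δ : ℝ) {N : ℕ}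
    {s : Finset (Fin (N + 1))} (hs : s.card = b) (y : ℝ) :
    deriv (fun x => (1 / (b : ℝ)) * ∑ n ∈ s, quadLoss δ (divergentCoeff b δ n) x) y
      = y / δ + if Fin.last N ∈ s then δ ^ 4 else -1 := by
  have hne : s.Nonempty := Finset.card_pos.1 (hs ▸ Nat.pos_of_ne_zero hb)
  have hb' : (b : ℝ) = s.card := by rw [hs]
  have hmean : (fun x => (1 / (b : ℝ)) * ∑ n ∈ s, quadLoss δ (divergentCoeff b δ n) x)
      = quadLoss δ (if Fin.last N ∈ s then δ ^ 4 else -1) := by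
    funext x
    rw [hb', mean_quadLoss hne, ← hb', mean_divergentCoeff hb δ hs]
  rw [hmean, (hasDerivAt_quadLoss δ _ y).deriv]

theorem abs_div_add_le {δ σ : ℝ} (hδ : 1 ≤ δ) (hσ : σ = δ ^ 4 ∨ σ = -1) (y : ℝ) :
    |y / δ + σ| ≤ δ⁻¹ * |y + δ * δ| + (δ ^ 4 + δ) := by
  have hδ0 : 0 < δ := by linarith
  have hsplit : y / δ + σ = δ⁻¹ * (y + δ * δ) + (σ - δ) := by field_simp; ring
  have hσδ : |σ - δ| ≤ δ ^ 4 + δ := by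
    rw [abs_le]
    rcases hσ with rfl | rfl <;> constructor <;> nlinarith [one_le_pow₀ (n := 4) hδ]
  rw [hsplit]
  refine (abs_add_le _ _).trans (add_le_add ?_ hσδ)
  rw [abs_mul, abs_of_pos (inv_pos.2 hδ0)]

theorem one_le_abs_div_add {δ σ : ℝ} (hδ : 2 ≤ δ) (hσ : σ = δ ^ 4 ∨ σ = -1) {y : ℝ}
    (hy : |y + δ * δ| ≤ 1) : 1 ≤ |y / δ + σ| := by
  have hδ0 : 0 < δ := by linarith
  obtain ⟨hy1, hy2⟩ := abs_le.1 hy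
  rcases hσ with rfl | rfl
  · have : -δ - 1 ≤ y / δ := by rw [le_div_iff₀ hδ0]; nlinarith
    refine le_abs.2 (Or.inl ?_)
    nlinarith [mul_le_mul hδ hδ (by norm_num) hδ0.le]
  · have : y / δ ≤ 0 := div_nonpos_of_nonpos_of_nonneg (by nlinarith) hδ0.le
    exact le_abs.2 (Or.inr (by linarith))

theorem not_tendsto_integral_quadLoss_adam {α β : ℝ} (hα : 0 < α) (hβ0 : 0 ≤ β) (hβ1 : β < 1)
    {b M : ℕ} (hb : b ≠ 0) {δ : ℝ} (hδ : 2 < δ) {Ω : Type*} [MeasurableSpace Ω] {μ : Measure Ω}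
    [IsProbabilityMeasure μ] {B : ℕ → Ω → Finset (Fin (M + 1))} (hB : ∀ t ω, (B t ω).card = b)
    {w v : ℕ → Ω → ℝ}
    (hrun : ∀ ω, IsAdamRun α β (fun t => deriv (fun x => (1 / (b : ℝ)) *
      ∑ n ∈ B t ω, quadLoss δ (divergentCoeff b δ n) x) (w t ω)) (w · ω) (v · ω)) :
    ¬Tendsto (fun t => ∫ ω, quadLoss δ δ (w t ω) ∂μ) atTop (nhds (-(δ ^ 2 * δ / 2))) := by
  have hδ0 : 0 < δ := by linarith
  obtain ⟨c, hc, hsep⟩ := exists_adam_escape_radius hα hβ0 hβ1 (inv_pos.2 hδ0).le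
    (by positivity : 0 < δ ^ 4 + δ) one_pos one_pos (-(δ * δ))
  simp only [sub_neg_eq_add] at hsep
  refine not_tendsto_integral_of_add_succ_ge (ε := c ^ 2 / (2 * δ))
    (neg_ne_zero.2 (by positivity)) (by positivity) (eventually_atTop.2 ⟨1, fun t ht ω => ?_⟩)
  have hgrad : ∀ t, deriv (fun x => (1 / (b : ℝ)) * ∑ n ∈ B t ω,
      quadLoss δ (divergentCoeff b δ n) x) (w t ω)
        = w t ω / δ + if Fin.last M ∈ B t ω then δ ^ 4 else -1 := fun t =>
    deriv_mean_quadLoss_divergentCoeff hb δ (hB t ω) _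
  refine quadLoss_add_quadLoss_ge hδ0 δ hc.le
    (hsep _ _ _ (hrun ω) (fun t => ?_) (fun t => ?_) t ht)
  · rw [hgrad]; exact abs_div_add_le (by linarith) (ite_eq_or_eq _ _ _) _
  · rw [hgrad]; exact one_le_abs_div_add hδ.le (ite_eq_or_eq _ _ _)

/-- For every fixed batch size `b ≥ 1` there exists `N*_b` such that for every `N > N*_b`
there exist `N` differentiable strongly convex loss functions on ℝ (explicitly, with
`δ = δ_{N,b} > 2` solving `(1+δ)/(1+δ⁴) = b/N`, take `f_n(w) = w²/(2δ) - w` for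
`n = 1,…,N-1` and `f_N(w) = w²/(2δ) + (bδ⁴ + b - 1)w`) on which mini-batch ADAM with
batch size `b` (batches sampled uniformly and independently) diverges in expectation for
every initial point: `E[F(w_t)]` does not converge to `min_w F(w)`, `F = (1/N)∑ f_n`. -/
theorem adam_diverges_minibatch_fixed_batch (α β₂ : ℝ)
    (hα : 0 < α) (hβ₂0 : 0 ≤ β₂) (hβ₂1 : β₂ < 1) (b : ℕ) (hb : 1 ≤ b) :
    ∃ Nstar : ℕ, ∀ N : ℕ, Nstar < N →
      ∃ (f : Fin N → ℝ → ℝ) (δ : ℝ), 2 < δ ∧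
        (1 + δ) / (1 + δ ^ 4) = (b : ℝ) / (N : ℝ) ∧
        (∀ n : Fin N, (n : ℕ) + 1 < N → f n = fun x => x ^ 2 / (2 * δ) - x) ∧
        (∀ n : Fin N, (n : ℕ) + 1 = N →
          f n = fun x => x ^ 2 / (2 * δ) + ((b : ℝ) * δ ^ 4 + (b : ℝ) - 1) * x) ∧
        (∀ n, Differentiable ℝ (f n)) ∧
        (∀ n, ∃ c > 0, StrongConvexOn Set.univ c (f n)) ∧
        -- divergence of mini-batch ADAM for every initial point
        (∀ (Ω : Type) (_mΩ : MeasurableSpace Ω) (μ : Measure Ω), IsProbabilityMeasure μ →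
          ∀ B : ℕ → Ω → Finset (Fin N),
            (∀ t, @Measurable Ω (Finset (Fin N)) _mΩ ⊤ (B t)) →
            ProbabilityTheory.iIndepFun (m := fun _ => (⊤ : MeasurableSpace (Finset (Fin N)))) B μ →
            (∀ t ω, (B t ω).card = b) →
            (∀ (t : ℕ) (s : Finset (Fin N)), s.card = b →
              μ {ω | B t ω = s} = ((N.choose b : ENNReal))⁻¹) →
          ∀ (w v : ℕ → Ω → ℝ) (w₁ : ℝ),
            (∀ ω, w 1 ω = w₁) →
            (∀ ω, v 0 ω = 0) →
            (∀ t : ℕ, 1 ≤ t → ∀ ω,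
              v t ω = β₂ * v (t - 1) ω +
                (1 - β₂) * (deriv (fun x => (1 / (b : ℝ)) * ∑ n ∈ B t ω, f n x) (w t ω)) ^ 2) →
            (∀ t : ℕ, 1 ≤ t → ∀ ω,
              w (t + 1) ω = w t ω -
                α * deriv (fun x => (1 / (b : ℝ)) * ∑ n ∈ B t ω, f n x) (w t ω) /
                  Real.sqrt (v t ω)) →
          ∀ Fmin : ℝ,
            IsLeast (Set.range fun x : ℝ => (1 / (N : ℝ)) * ∑ n, f n x) Fmin →
            ¬ Tendsto (fun t => ∫ ω, (1 / (N : ℝ)) * ∑ n, f n (w t ω) ∂μ) atTop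
              (nhds Fmin)) := by
  refine ⟨17 * b, fun N hN => ?_⟩
  have hbR : (1 : ℝ) ≤ b := by exact_mod_cast hb
  have hbN : 17 * (b : ℝ) < N := by exact_mod_cast hN
  obtain ⟨δ, hδ, hδeq⟩ := exists_two_lt_div_eq (q := b / N) (div_pos (by linarith) (by linarith))
    (by rw [div_lt_iff₀ (by linarith)]; linarith)
  obtain ⟨M, rfl⟩ := Nat.exists_eq_add_one_of_ne_zero (by omega : N ≠ 0)
  have hδ0 : 0 < δ := by linarith
  have hrel : ((M + 1 : ℕ) : ℝ) * (1 + δ) = b * (1 + δ ^ 4) := by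
    rw [div_eq_div_iff (by positivity) (by positivity)] at hδeq; linarith
  have hobj : ∀ x, (1 / ((M + 1 : ℕ) : ℝ)) * ∑ n, quadLoss δ (divergentCoeff b δ n) x
      = quadLoss δ δ x := fun x => by
    have := mean_quadLoss (Finset.univ_nonempty (α := Fin (M + 1))) δ (divergentCoeff b δ) x
    rwa [Finset.card_univ, Fintype.card_fin, mean_divergentCoeff_univ hrel] at this
  refine ⟨fun n => quadLoss δ (divergentCoeff b δ n), δ, hδ, hδeq, fun n hn => ?_, fun n hn => ?_,
    fun n => differentiable_quadLoss δ _,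
    fun n => ⟨δ⁻¹, inv_pos.2 hδ0, strongConvexOn_quadLoss hδ0 _⟩, ?_⟩
  · have : n ≠ Fin.last M := by rintro rfl; simp at hn
    funext x
    simp [quadLoss, divergentCoeff, this, sub_eq_add_neg]
  · have : n = Fin.last M := Fin.ext (by simp; omega)
    funext x
    simp [quadLoss, divergentCoeff, this]
  · intro Ω _ μ _ B _ _ hBcard _ w v _ _ hv0 hv hw Fmin hFmin
    simp only [hobj] at hFmin ⊢
    rw [hFmin.unique (isLeast_range_quadLoss hδ0 δ)]
    exact not_tendsto_integral_quadLoss_adam hα hβ₂0 hβ₂1 (by omega) hδ hBcard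
      fun ω => ⟨hv0 ω, fun t ht => hv t ht ω, fun t ht => hw t ht ω⟩
end

section
/- In the VRADAM (Option A) setting, set Q₈ = (1−β₁)/√(9G² + ε) and Q₉ = (3G²Lm(m−1)/(1−β₁)² + 9G²Lm²)/(2ε). Then for every outer iteration t, every choice of mini-batches, and every starting point, the consecutive outer iterates satisfy F(w̃_{t+1}) − F(w̃_t) ≤ −Q₈ · α_t · m · ‖∇F(w̃_t)‖₂² + Q₉ · α_t². -/
/-!
Within one inner loop the SVRG estimator satisfies `‖g_k‖ ≤ 3G` and
`‖g_k - ∇F(w̃)‖ ≤ L ‖w_k - w̃‖`. Bias-corrected moving averages inherit bounds of this kind, so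
each step is `w_{k+1} = w_k - α D_k⁻¹ m̂_k` with `‖m̂_k‖ ≤ 3G` and a diagonal `D_k` with entries
in `[√ε, √(9G² + ε)]`. Hence every step has length at most `c = 3Gα/√ε`, the iterate `w_k` stays
within `(k - 1) c` of `w̃`, and both `m̂_k` and `∇F(w_k)` stay within `L (k - 1) c` of `∇F(w̃)`.
The descent lemma for the `L`-smooth `F` then bounds the change of `F` in step `k` by
`-α ‖∇F(w̃)‖² / √(9G² + ε)` plus an error of order `L G² α² k / ε`; summing over the `m` steps
gives the claim.
-/

open MeasureTheory

/-- The full-batch objective `F = (1/N) ∑_n f_n`. -/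
noncomputable def fullLoss (d N : ℕ) (f : Fin N → EuclideanSpace ℝ (Fin d) → ℝ) :
    EuclideanSpace ℝ (Fin d) → ℝ :=
  fun x => (1 / (N : ℝ)) * ∑ n, f n x

/-- The mini-batch objective `F^B = (1/b) ∑_{n ∈ B} f_n`. -/
noncomputable def batchLoss (d N : ℕ) (b : ℕ) (f : Fin N → EuclideanSpace ℝ (Fin d) → ℝ)
    (B : Finset (Fin N)) : EuclideanSpace ℝ (Fin d) → ℝ :=
  fun x => (1 / (b : ℝ)) * ∑ n ∈ B, f n x

open Finset
open scoped RealInnerProductSpace NNReal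

theorem norm_one_div_card_smul_sum_le {ι F : Type*} [SeminormedAddCommGroup F] [NormedSpace ℝ F]
    (s : Finset ι) {z : ι → F} {R : ℝ} (hR : 0 ≤ R) (h : ∀ n ∈ s, ‖z n‖ ≤ R) :
    ‖(1 / (#s : ℝ)) • ∑ n ∈ s, z n‖ ≤ R := by
  rcases s.eq_empty_or_nonempty with rfl | hs
  · simpa using hR
  have hcard : (0 : ℝ) < #s := by exact_mod_cast hs.card_pos
  rw [norm_smul, Real.norm_of_nonneg (by positivity), one_div, inv_mul_le_iff₀ hcard]
  simpa using norm_sum_le_of_le s h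

section MeanLoss

variable {E ι : Type*} [NormedAddCommGroup E] [InnerProductSpace ℝ E] [CompleteSpace E]
  {f : ι → E → ℝ}

theorem gradient_const_mul_sum (s : Finset ι) (hf : ∀ n, Differentiable ℝ (f n)) (c : ℝ)
    (x : E) : gradient (fun y => c * ∑ n ∈ s, f n y) x = c • ∑ n ∈ s, gradient (f n) x := by
  refine HasGradientAt.gradient (hasGradientAt_iff_hasFDerivAt.mpr ?_)
  have := (HasFDerivAt.fun_sum (u := s) fun n _ =>
    hasGradientAt_iff_hasFDerivAt.mp (hf n x).hasGradientAt).const_mul c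
  simpa [map_sum] using this

theorem norm_gradient_mean_le (s : Finset ι) (hf : ∀ n, Differentiable ℝ (f n)) {G : ℝ}
    (hG : 0 ≤ G) (hbdd : ∀ n x, ‖gradient (f n) x‖ ≤ G) (x : E) :
    ‖gradient (fun y => 1 / (#s : ℝ) * ∑ n ∈ s, f n y) x‖ ≤ G := by
  rw [gradient_const_mul_sum s hf]
  exact norm_one_div_card_smul_sum_le s hG fun n _ => hbdd n x

theorem lipschitzWith_gradient_mean (s : Finset ι) (hf : ∀ n, Differentiable ℝ (f n)) {K : ℝ≥0}
    (hlip : ∀ n, LipschitzWith K (gradient (f n))) :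
    LipschitzWith K (gradient fun y => 1 / (#s : ℝ) * ∑ n ∈ s, f n y) := by
  refine LipschitzWith.of_dist_le_mul fun x y => ?_
  rw [dist_eq_norm, dist_eq_norm, gradient_const_mul_sum s hf, gradient_const_mul_sum s hf,
    ← smul_sub, ← sum_sub_distrib]
  exact norm_one_div_card_smul_sum_le s (by positivity) fun n _ => (hlip n).norm_sub_le x y

end MeanLoss

theorem le_add_inner_add_of_lipschitzWith_gradient {E : Type*} [NormedAddCommGroup E]
    [InnerProductSpace ℝ E] [CompleteSpace E] {F : E → ℝ} (hF : Differentiable ℝ F)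
    {K : ℝ≥0} (hsmooth : LipschitzWith K (gradient F)) (x y : E) :
    F y ≤ F x + ⟪gradient F x, y - x⟫ + K / 2 * ‖y - x‖ ^ 2 := by
  set u := y - x
  -- `φ` is antitone on `[0, 1]`: its derivative `⟪∇F (x + s • u) - ∇F x, u⟫ - K s ‖u‖²` is `≤ 0`.
  set φ : ℝ → ℝ := fun s => F (x + s • u) - s * ⟪gradient F x, u⟫ - K / 2 * s ^ 2 * ‖u‖ ^ 2
  have hφ : ∀ s, HasDerivAt φ
      (⟪gradient F (x + s • u), u⟫ - ⟪gradient F x, u⟫ - K * s * ‖u‖ ^ 2) s := by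
    intro s
    have hline : HasDerivAt (fun s : ℝ => x + s • u) u s := by
      simpa using ((hasDerivAt_id s).smul_const u).const_add x
    have hFline : HasDerivAt (fun s : ℝ => F (x + s • u)) ⟪gradient F (x + s • u), u⟫ s := by
      have := (hasGradientAt_iff_hasFDerivAt.mp (hF (x + s • u)).hasGradientAt).comp_hasDerivAt s
        hline
      simpa [InnerProductSpace.toDual_apply_apply, Function.comp_def] using this
    have hlin : HasDerivAt (fun s : ℝ => s * ⟪gradient F x, u⟫) ⟪gradient F x, u⟫ s := by
      simpa using (hasDerivAt_id s).mul_const ⟪gradient F x, u⟫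
    have hquad : HasDerivAt (fun s : ℝ => K / 2 * s ^ 2 * ‖u‖ ^ 2) (K * s * ‖u‖ ^ 2) s :=
      (((hasDerivAt_pow 2 s).const_mul ((K : ℝ) / 2)).mul_const (‖u‖ ^ 2)).congr_deriv
        (by push_cast; ring)
    exact (hFline.sub hlin).sub hquad
  have hanti : AntitoneOn φ (Set.Icc 0 1) := by
    refine antitoneOn_of_deriv_nonpos (convex_Icc 0 1)
      (fun s _ => (hφ s).continuousAt.continuousWithinAt)
      (fun s _ => (hφ s).differentiableAt.differentiableWithinAt) fun s hs => ?_
    rw [interior_Icc] at hs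
    have hinner : ⟪gradient F (x + s • u) - gradient F x, u⟫ ≤ K * s * ‖u‖ ^ 2 :=
      calc ⟪gradient F (x + s • u) - gradient F x, u⟫
          ≤ ‖gradient F (x + s • u) - gradient F x‖ * ‖u‖ := real_inner_le_norm _ _
        _ ≤ K * ‖x + s • u - x‖ * ‖u‖ := by gcongr; exact hsmooth.norm_sub_le _ _
        _ = K * s * ‖u‖ ^ 2 := by
          rw [add_sub_cancel_left, norm_smul, Real.norm_of_nonneg hs.1.le]
          ring
    rw [(hφ s).deriv, ← inner_sub_left]
    linarith
  have h01 := hanti (Set.left_mem_Icc.mpr zero_le_one) (Set.right_mem_Icc.mpr zero_le_one)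
    zero_le_one
  simp only [φ, u, zero_smul, one_smul, add_zero, add_sub_cancel] at h01
  linarith

section ExponentialMovingAverage

variable {E : Type*} [SeminormedAddCommGroup E] [NormedSpace ℝ E]

-- `x k - (1 - β ^ k) • q` is itself the moving average of `g k - q`.
theorem norm_ema_sub_le {β : ℝ} (hβ0 : 0 ≤ β) (hβ1 : β ≤ 1) {m : ℕ} {x g : ℕ → E} (q : E)
    {r : ℕ → ℝ} (hr : Monotone r) (h0 : x 0 = 0)
    (hrec : ∀ k ∈ Icc 1 m, x k = β • x (k - 1) + (1 - β) • g k)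
    (hg : ∀ k ∈ Icc 1 m, ‖g k - q‖ ≤ r k) :
    ∀ k ≤ m, ‖x k - (1 - β ^ k) • q‖ ≤ (1 - β ^ k) * r k := by
  intro k
  induction k with
  | zero => simp [h0]
  | succ k ih =>
    intro hk
    have hmem : k + 1 ∈ Icc 1 m := mem_Icc.mpr ⟨k.succ_pos, hk⟩
    have hsplit : x (k + 1) - (1 - β ^ (k + 1)) • q
        = β • (x k - (1 - β ^ k) • q) + (1 - β) • (g (k + 1) - q) := by
      rw [hrec _ hmem, Nat.add_sub_cancel, pow_succ]
      module
    have hβk : 0 ≤ β * (1 - β ^ k) := mul_nonneg hβ0 (sub_nonneg.mpr (pow_le_one₀ hβ0 hβ1))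
    calc ‖x (k + 1) - (1 - β ^ (k + 1)) • q‖
        ≤ β * ‖x k - (1 - β ^ k) • q‖ + (1 - β) * ‖g (k + 1) - q‖ := by
          rw [hsplit]
          refine (norm_add_le _ _).trans_eq ?_
          rw [norm_smul, norm_smul, Real.norm_of_nonneg hβ0, Real.norm_of_nonneg (by linarith)]
      _ ≤ β * ((1 - β ^ k) * r k) + (1 - β) * r (k + 1) := by
          gcongr
          · exact ih (Nat.le_of_succ_le hk)
          · exact hg _ hmem
      _ ≤ (1 - β ^ (k + 1)) * r (k + 1) := by
          have := mul_le_mul_of_nonneg_left (hr k.le_succ) hβk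
          rw [pow_succ]
          nlinarith

theorem norm_inv_smul_ema_sub_le {β : ℝ} (hβ0 : 0 ≤ β) (hβ1 : β < 1) {m : ℕ} {x g : ℕ → E}
    (q : E) {r : ℕ → ℝ} (hr : Monotone r) (h0 : x 0 = 0)
    (hrec : ∀ k ∈ Icc 1 m, x k = β • x (k - 1) + (1 - β) • g k)
    (hg : ∀ k ∈ Icc 1 m, ‖g k - q‖ ≤ r k) :
    ∀ k ∈ Icc 1 m, ‖(1 - β ^ k)⁻¹ • x k - q‖ ≤ r k := by
  intro k hk
  obtain ⟨hk1, hkm⟩ := mem_Icc.mp hk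
  have hpos : 0 < 1 - β ^ k := sub_pos.mpr (pow_lt_one₀ hβ0 hβ1 (by omega))
  have hsplit : (1 - β ^ k)⁻¹ • x k - q = (1 - β ^ k)⁻¹ • (x k - (1 - β ^ k) • q) := by
    rw [smul_sub, smul_smul, inv_mul_cancel₀ hpos.ne', one_smul]
  rw [hsplit, norm_smul, Real.norm_of_nonneg (inv_nonneg.mpr hpos.le), inv_mul_le_iff₀ hpos]
  exact norm_ema_sub_le hβ0 hβ1.le q hr h0 hrec hg k hkm

theorem inv_mul_ema_mem_Icc {β : ℝ} (hβ0 : 0 ≤ β) (hβ1 : β < 1) {m : ℕ} {x g : ℕ → ℝ} {R : ℝ}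
    (h0 : x 0 = 0) (hrec : ∀ k ∈ Icc 1 m, x k = β * x (k - 1) + (1 - β) * g k)
    (hg : ∀ k ∈ Icc 1 m, g k ∈ Set.Icc 0 R) :
    ∀ k ∈ Icc 1 m, (1 - β ^ k)⁻¹ * x k ∈ Set.Icc 0 R := by
  have hball : Set.Icc 0 R = Metric.closedBall (R / 2) (R / 2) := by
    rw [Real.closedBall_eq_Icc]; ring_nf
  simp only [hball, Metric.mem_closedBall, Real.dist_eq] at hg ⊢
  exact norm_inv_smul_ema_sub_le hβ0 hβ1 (R / 2) monotone_const h0 hrec hg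

theorem ema_sq_div_mem_Icc {ι : Type*} [Fintype ι] {β : ℝ} (hβ0 : 0 ≤ β) (hβ1 : β < 1) {m : ℕ}
    {v g : ℕ → EuclideanSpace ℝ ι} {Γ : ℝ} (h0 : v 0 = 0)
    (hrec : ∀ k ∈ Icc 1 m, ∀ i, v k i = β * v (k - 1) i + (1 - β) * (g k i) ^ 2)
    (hg : ∀ k ∈ Icc 1 m, ‖g k‖ ≤ Γ) :
    ∀ k ∈ Icc 1 m, ∀ i, v k i / (1 - β ^ k) ∈ Set.Icc 0 (Γ ^ 2) := by
  intro k hk i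
  rw [div_eq_inv_mul]
  refine inv_mul_ema_mem_Icc hβ0 hβ1 (x := fun k => v k i) (by simp [h0])
    (fun k hk => hrec k hk i) (fun k hk => ⟨sq_nonneg _, ?_⟩) k hk
  have := abs_le.mp ((PiLp.norm_apply_le (g k) i).trans (hg k hk))
  exact sq_le_sq' this.1 this.2

end ExponentialMovingAverage

theorem norm_sub_le_of_norm_succ_sub_le {E : Type*} [SeminormedAddCommGroup E] {w : ℕ → E}
    {c : ℝ} {m : ℕ} (h : ∀ k ∈ Icc 1 m, ‖w (k + 1) - w k‖ ≤ c) :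
    ∀ k ∈ Icc 1 (m + 1), ‖w k - w 1‖ ≤ ((k : ℝ) - 1) * c := by
  intro k hk
  obtain ⟨j, rfl⟩ : ∃ j, k = j + 1 := ⟨k - 1, by grind⟩
  have := dist_le_range_sum_of_dist_le (f := fun i => w (i + 1)) j (d := fun _ => c)
    fun hi => by rw [dist_comm, dist_eq_norm]; exact h _ (mem_Icc.mpr ⟨by omega, by grind⟩)
  simpa [dist_eq_norm'] using this

theorem sub_le_of_succ_sub_le_affine {u : ℕ → ℝ} {a b : ℝ} {m : ℕ}
    (h : ∀ k ∈ Icc 1 m, u (k + 1) - u k ≤ a + b * ((k : ℝ) - 1)) :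
    u (m + 1) - u 1 ≤ m * a + b * (m * (m - 1) / 2) := by
  induction m with
  | zero => simp
  | succ m ih =>
    have hm := h (m + 1) (mem_Icc.mpr ⟨by omega, le_rfl⟩)
    have := ih fun k hk => h k (mem_Icc.mpr ⟨(mem_Icc.mp hk).1, by grind⟩)
    push_cast at hm ⊢
    linarith

section DiagonalScaling

variable {ι : Type*}

noncomputable def diagDiv (D : ι → ℝ) (v : EuclideanSpace ℝ ι) : EuclideanSpace ℝ ι :=
  WithLp.toLp 2 fun i => v i / D i

@[simp]
theorem diagDiv_apply (D : ι → ℝ) (v : EuclideanSpace ℝ ι) (i : ι) :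
    diagDiv D v i = v i / D i := rfl

variable [Fintype ι]

theorem norm_diagDiv_le {D : ι → ℝ} {lo : ℝ} (hlo : 0 < lo) (hD : ∀ i, lo ≤ D i)
    (v : EuclideanSpace ℝ ι) : ‖diagDiv D v‖ ≤ ‖v‖ / lo := by
  refine le_of_sq_le_sq ?_ (by positivity)
  rw [div_pow, EuclideanSpace.real_norm_sq_eq, EuclideanSpace.real_norm_sq_eq, sum_div]
  refine sum_le_sum fun i _ => ?_
  rw [diagDiv_apply, div_pow]
  gcongr
  exact hD i

theorem inner_diagDiv (D : ι → ℝ) (a v : EuclideanSpace ℝ ι) :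
    ⟪a, diagDiv D v⟫ = ∑ i, a i * v i / D i := by
  simp [PiLp.inner_apply, mul_div_assoc, mul_comm]

theorem neg_le_inner_diagDiv {D : ι → ℝ} {lo : ℝ} (hlo : 0 < lo) (hD : ∀ i, lo ≤ D i)
    (a v : EuclideanSpace ℝ ι) : -(‖a‖ * ‖v‖ / lo) ≤ ⟪a, diagDiv D v⟫ := by
  calc -(‖a‖ * ‖v‖ / lo) ≤ -(‖a‖ * ‖diagDiv D v‖) := by
        rw [mul_div_assoc]
        gcongr
        exact norm_diagDiv_le hlo hD v
    _ ≤ ⟪a, diagDiv D v⟫ := neg_le_of_abs_le (abs_real_inner_le_norm _ _)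

theorem norm_sq_div_le_inner_diagDiv {D : ι → ℝ} {hi : ℝ} (hD0 : ∀ i, 0 < D i)
    (hD : ∀ i, D i ≤ hi) (q : EuclideanSpace ℝ ι) : ‖q‖ ^ 2 / hi ≤ ⟪q, diagDiv D q⟫ := by
  rw [inner_diagDiv, EuclideanSpace.real_norm_sq_eq, sum_div]
  refine sum_le_sum fun i _ => ?_
  rw [← sq]
  exact div_le_div_of_nonneg_left (sq_nonneg _) (hD0 i) (hD i)

-- Split `a ⊙ p = q ⊙ q + (a - q) ⊙ p + q ⊙ (p - q)` coordinatewise.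
theorem inner_diagDiv_ge {D : ι → ℝ} {lo hi : ℝ} (hlo : 0 < lo) (hD : ∀ i, lo ≤ D i ∧ D i ≤ hi)
    (a p q : EuclideanSpace ℝ ι) :
    ‖q‖ ^ 2 / hi - (‖a - q‖ * ‖p‖ + ‖q‖ * ‖p - q‖) / lo ≤ ⟪a, diagDiv D p⟫ := by
  have hsplit : ⟪a, diagDiv D p⟫
      = ⟪q, diagDiv D q⟫ + ⟪a - q, diagDiv D p⟫ + ⟪q, diagDiv D (p - q)⟫ := by
    simp only [inner_diagDiv, ← sum_add_distrib, PiLp.sub_apply]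
    refine sum_congr rfl fun i _ => ?_
    ring
  have hlo' : ∀ i, lo ≤ D i := fun i => (hD i).1
  have h1 := norm_sq_div_le_inner_diagDiv (fun i => hlo.trans_le (hlo' i)) (fun i => (hD i).2) q
  have h2 := neg_le_inner_diagDiv hlo hlo' (a - q) p
  have h3 := neg_le_inner_diagDiv hlo hlo' q (p - q)
  rw [hsplit, add_div]
  linarith

theorem norm_sub_le_of_eq_sub_smul_diagDiv {x x' p : EuclideanSpace ℝ ι} {D : ι → ℝ}
    {α lo M : ℝ} (hα : 0 ≤ α) (hlo : 0 < lo) (hD : ∀ i, lo ≤ D i)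
    (hstep : x' = x - α • diagDiv D p) (hp : ‖p‖ ≤ M) : ‖x' - x‖ ≤ α * M / lo := by
  rw [hstep, sub_sub_cancel_left, norm_neg, norm_smul, Real.norm_of_nonneg hα, mul_div_assoc]
  gcongr
  exact (norm_diagDiv_le hlo hD p).trans (by gcongr)

theorem sub_le_of_eq_sub_smul_diagDiv {F : EuclideanSpace ℝ ι → ℝ} (hF : Differentiable ℝ F)
    {K : ℝ≥0} (hsmooth : LipschitzWith K (gradient F)) {x x' p q : EuclideanSpace ℝ ι}
    {D : ι → ℝ} {α lo hi M G δ : ℝ} (hα : 0 ≤ α) (hlo : 0 < lo) (hD : ∀ i, lo ≤ D i ∧ D i ≤ hi)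
    (hstep : x' = x - α • diagDiv D p) (hp : ‖p‖ ≤ M) (hq : ‖q‖ ≤ G) (hpq : ‖p - q‖ ≤ δ)
    (hxq : ‖gradient F x - q‖ ≤ δ) :
    F x' - F x ≤ -(α * ‖q‖ ^ 2 / hi) + α * ((M + G) * δ) / lo + K / 2 * (α * M / lo) ^ 2 := by
  have hdescent := le_add_inner_add_of_lipschitzWith_gradient hF hsmooth x x'
  have hnorm := norm_sub_le_of_eq_sub_smul_diagDiv hα hlo (fun i => (hD i).1) hstep hp
  have hinner := inner_diagDiv_ge hlo hD (gradient F x) p q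
  have hcross : ‖gradient F x - q‖ * ‖p‖ + ‖q‖ * ‖p - q‖ ≤ (M + G) * δ := by
    have h1 := mul_le_mul hxq hp (norm_nonneg _) ((norm_nonneg _).trans hpq)
    have h2 := mul_le_mul hq hpq (norm_nonneg _) ((norm_nonneg _).trans hq)
    linarith
  have hdir : ‖q‖ ^ 2 / hi - (M + G) * δ / lo ≤ ⟪gradient F x, diagDiv D p⟫ :=
    le_trans (by gcongr) hinner
  have hquad : (K : ℝ) / 2 * ‖x' - x‖ ^ 2 ≤ K / 2 * (α * M / lo) ^ 2 := by gcongr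
  rw [hstep, sub_sub_cancel_left, inner_neg_right, inner_smul_right] at hdescent
  rw [hstep, sub_sub_cancel_left] at hquad
  have := mul_le_mul_of_nonneg_left hdir hα
  rw [mul_sub, ← mul_div_assoc, ← mul_div_assoc] at this
  rw [hstep]
  linarith

end DiagonalScaling

theorem vradam_inner_loop_descent {ι : Type*} [Fintype ι] {F : EuclideanSpace ℝ ι → ℝ}
    (hF : Differentiable ℝ F) {K : ℝ≥0} (hsmooth : LipschitzWith K (gradient F))
    {β₁ β₂ ε α Γ G : ℝ} (hβ₁0 : 0 ≤ β₁) (hβ₁1 : β₁ < 1) (hβ₂0 : 0 ≤ β₂) (hβ₂1 : β₂ < 1)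
    (hε : 0 < ε) (hα : 0 ≤ α) (hΓ : 0 ≤ Γ) {m : ℕ}
    {x₀ : EuclideanSpace ℝ ι} {w mm v g : ℕ → EuclideanSpace ℝ ι}
    (hq : ‖gradient F x₀‖ ≤ G) (hg : ∀ k ∈ Icc 1 m, ‖g k‖ ≤ Γ)
    (hgq : ∀ k ∈ Icc 1 m, ‖g k - gradient F x₀‖ ≤ K * ‖w k - x₀‖)
    (hw1 : w 1 = x₀) (hm0 : mm 0 = 0) (hv0 : v 0 = 0)
    (hmrec : ∀ k ∈ Icc 1 m, mm k = β₁ • mm (k - 1) + (1 - β₁) • g k)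
    (hvrec : ∀ k ∈ Icc 1 m, ∀ i, v k i = β₂ * v (k - 1) i + (1 - β₂) * (g k i) ^ 2)
    (hwrec : ∀ k ∈ Icc 1 m, ∀ i,
      w (k + 1) i = w k i - α * (mm k i / (1 - β₁ ^ k)) / √(v k i / (1 - β₂ ^ k) + ε)) :
    F (w (m + 1)) - F x₀ ≤
      m * (-(α * ‖gradient F x₀‖ ^ 2 / √(Γ ^ 2 + ε)) + K / 2 * (α * Γ / √ε) ^ 2) +
        α * ((Γ + G) * (K * (α * Γ / √ε))) / √ε * (m * (m - 1) / 2) := by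
  set q := gradient F x₀
  set c := α * Γ / √ε
  set mhat : ℕ → EuclideanSpace ℝ ι := fun k => (1 - β₁ ^ k)⁻¹ • mm k
  set D : ℕ → ι → ℝ := fun k i => √(v k i / (1 - β₂ ^ k) + ε)
  have hmhat : ∀ k ∈ Icc 1 m, ‖mhat k‖ ≤ Γ := by
    simpa using norm_inv_smul_ema_sub_le hβ₁0 hβ₁1 0 monotone_const hm0 hmrec
      (by simpa using hg)
  have hvhat := ema_sq_div_mem_Icc hβ₂0 hβ₂1 hv0 hvrec hg
  have hD : ∀ k ∈ Icc 1 m, ∀ i, √ε ≤ D k i ∧ D k i ≤ √(Γ ^ 2 + ε) := fun k hk i =>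
    ⟨Real.sqrt_le_sqrt (by linarith [(hvhat k hk i).1]),
      Real.sqrt_le_sqrt (by linarith [(hvhat k hk i).2])⟩
  have hstep : ∀ k ∈ Icc 1 m, w (k + 1) = w k - α • diagDiv (D k) (mhat k) := by
    intro k hk
    ext i
    simp only [hwrec k hk i, PiLp.sub_apply, PiLp.smul_apply, diagDiv_apply, smul_eq_mul, mhat, D]
    ring
  have hsqrtε : 0 < √ε := Real.sqrt_pos.mpr hε
  have hstep_le : ∀ k ∈ Icc 1 m, ‖w (k + 1) - w k‖ ≤ c := fun k hk =>
    norm_sub_le_of_eq_sub_smul_diagDiv hα hsqrtε (fun i => (hD k hk i).1) (hstep k hk)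
      (hmhat k hk)
  have hdrift : ∀ k ∈ Icc 1 m, ‖w k - x₀‖ ≤ ((k : ℝ) - 1) * c := fun k hk =>
    hw1 ▸ norm_sub_le_of_norm_succ_sub_le hstep_le k (Icc_subset_Icc_right m.le_succ hk)
  set r : ℕ → ℝ := fun k => K * (((k : ℝ) - 1) * c)
  have hr : Monotone r := fun a b hab => by simp only [r]; gcongr
  have hgr : ∀ k ∈ Icc 1 m, ‖g k - q‖ ≤ r k := fun k hk =>
    (hgq k hk).trans (mul_le_mul_of_nonneg_left (hdrift k hk) K.2)
  have hmhat_q : ∀ k ∈ Icc 1 m, ‖mhat k - q‖ ≤ r k :=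
    norm_inv_smul_ema_sub_le hβ₁0 hβ₁1 q hr hm0 hmrec hgr
  have hFq : ∀ k ∈ Icc 1 m, ‖gradient F (w k) - q‖ ≤ r k := fun k hk =>
    (hsmooth.norm_sub_le _ _).trans (mul_le_mul_of_nonneg_left (hdrift k hk) K.2)
  rw [← hw1]
  refine sub_le_of_succ_sub_le_affine (u := fun k => F (w k)) fun k hk => ?_
  have := sub_le_of_eq_sub_smul_diagDiv hF hsmooth hα hsqrtε (hD k hk) (hstep k hk) (hmhat k hk)
    hq (hmhat_q k hk) (hFq k hk)
  exact this.trans_eq (by ring)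

theorem vradam_inner_loop_bound_le {β₁ ε α G L s : ℝ} (hβ₁0 : 0 ≤ β₁) (hβ₁1 : β₁ < 1) (hε : 0 < ε)
    (hα : 0 ≤ α) (hL : 0 ≤ L) (hs : 0 ≤ s) (m : ℕ) :
    m * (-(α * s / √((3 * G) ^ 2 + ε)) + L / 2 * (α * (3 * G) / √ε) ^ 2) +
        α * ((3 * G + G) * (L * (α * (3 * G) / √ε))) / √ε * (m * (m - 1) / 2) ≤
      -((1 - β₁) / √(9 * G ^ 2 + ε)) * α * m * s +
        ((3 * G ^ 2 * L * m * (m - 1) / (1 - β₁) ^ 2 + 9 * G ^ 2 * L * m ^ 2) / (2 * ε)) *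
          α ^ 2 := by
  have hγ : √((3 * G) ^ 2 + ε) = √(9 * G ^ 2 + ε) := by ring_nf
  set γ := √(9 * G ^ 2 + ε)
  have hsqrt : √ε * √ε = ε := Real.mul_self_sqrt hε.le
  have hmm : 0 ≤ (m : ℝ) * (m - 1) := by
    rcases m.eq_zero_or_pos with rfl | hm
    · simp
    · exact mul_nonneg (by positivity) (sub_nonneg.mpr (by exact_mod_cast hm))
  have hβ : (m : ℝ) * (m - 1) ≤ m * (m - 1) / (1 - β₁) ^ 2 :=
    le_div_self hmm (by nlinarith) (by nlinarith)
  have hdescent : -(m * (α * s / γ)) ≤ -((1 - β₁) / γ) * α * m * s := by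
    have hX : 0 ≤ m * α * s / γ := by positivity
    calc -(m * (α * s / γ)) = -(m * α * s / γ) := by ring
      _ ≤ -((1 - β₁) * (m * α * s / γ)) := neg_le_neg (mul_le_of_le_one_left hX (by linarith))
      _ = -((1 - β₁) / γ) * α * m * s := by ring
  have herror : m * (L / 2 * (α * (3 * G) / √ε) ^ 2) +
        α * ((3 * G + G) * (L * (α * (3 * G) / √ε))) / √ε * (m * (m - 1) / 2) ≤
      ((3 * G ^ 2 * L * m * (m - 1) / (1 - β₁) ^ 2 + 9 * G ^ 2 * L * m ^ 2) / (2 * ε)) *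
        α ^ 2 := by
    calc _ = G ^ 2 * L * α ^ 2 / (2 * ε) * (12 * (m * (m - 1)) + 9 * m) := by
          field_simp
          rw [sq (√ε), hsqrt]
          ring
      _ ≤ G ^ 2 * L * α ^ 2 / (2 * ε) * (3 * (m * (m - 1) / (1 - β₁) ^ 2) + 9 * m ^ 2) := by
          refine mul_le_mul_of_nonneg_left ?_ (by positivity)
          linarith
      _ = _ := by ring
  rw [hγ]
  linarith

theorem vradam_descent_step_general
    (d N b m : ℕ)
    (f : Fin N → EuclideanSpace ℝ (Fin d) → ℝ) (L G : ℝ) (hL : 0 < L) (hG : 0 < G)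
    (hdiff : ∀ n, Differentiable ℝ (f n))
    (hlip : ∀ n, LipschitzWith (Real.toNNReal L) (gradient (f n)))
    (hbdd : ∀ n x, ‖gradient (f n) x‖ ≤ G)
    (β₁ β₂ ε : ℝ) (hβ₁0 : 0 ≤ β₁) (hβ₁1 : β₁ < 1) (hβ₂0 : 0 ≤ β₂) (hβ₂1 : β₂ < 1)
    (hε : 0 < ε)
    (α : ℕ → ℝ) (hα : ∀ t, 0 < α t)
    (B : ℕ → ℕ → Finset (Fin N)) (hB : ∀ t k, (B t k).card = b)
    (wt : ℕ → EuclideanSpace ℝ (Fin d))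
    (w mm v g : ℕ → ℕ → EuclideanSpace ℝ (Fin d))
    -- VRADAM inner loop with resetting (Option A)
    (hw1 : ∀ t : ℕ, 1 ≤ t → w t 1 = wt t)
    (hm0 : ∀ t, mm t 0 = 0) (hv0 : ∀ t, v t 0 = 0)
    (hg : ∀ t : ℕ, 1 ≤ t → ∀ k ∈ Finset.Icc 1 m,
      g t k = gradient (batchLoss d N b f (B t k)) (w t k)
        - gradient (batchLoss d N b f (B t k)) (wt t)
        + gradient (fullLoss d N f) (wt t))
    (hmrec : ∀ t : ℕ, 1 ≤ t → ∀ k ∈ Finset.Icc 1 m,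
      mm t k = β₁ • mm t (k - 1) + (1 - β₁) • g t k)
    (hvrec : ∀ t : ℕ, 1 ≤ t → ∀ k ∈ Finset.Icc 1 m, ∀ i,
      v t k i = β₂ * v t (k - 1) i + (1 - β₂) * (g t k i) ^ 2)
    (hwrec : ∀ t : ℕ, 1 ≤ t → ∀ k ∈ Finset.Icc 1 m, ∀ i,
      w t (k + 1) i = w t k i -
        α t * (mm t k i / (1 - β₁ ^ k)) / Real.sqrt (v t k i / (1 - β₂ ^ k) + ε))
    (hnext : ∀ t : ℕ, 1 ≤ t → wt (t + 1) = w t (m + 1)) :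
    ∀ t : ℕ, 1 ≤ t →
      fullLoss d N f (wt (t + 1)) - fullLoss d N f (wt t) ≤
        -((1 - β₁) / Real.sqrt (9 * G ^ 2 + ε)) * α t * m *
            ‖gradient (fullLoss d N f) (wt t)‖ ^ 2 +
          ((3 * G ^ 2 * L * m * (m - 1) / (1 - β₁) ^ 2 + 9 * G ^ 2 * L * m ^ 2) / (2 * ε)) *
            (α t) ^ 2 := by
  intro t ht
  have hK : (Real.toNNReal L : ℝ) = L := Real.coe_toNNReal L hL.le
  have hfull : fullLoss d N f =
      fun x => 1 / (#(univ : Finset (Fin N)) : ℝ) * ∑ n ∈ univ, f n x := by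
    simp only [card_univ, Fintype.card_fin]
    rfl
  have hbatch : ∀ k, batchLoss d N b f (B t k) =
      fun x => 1 / (#(B t k) : ℝ) * ∑ n ∈ B t k, f n x := fun k => by rw [hB]; rfl
  have hFdiff : Differentiable ℝ (fullLoss d N f) := by rw [hfull]; fun_prop
  have hFsmooth := hfull ▸ lipschitzWith_gradient_mean univ hdiff hlip
  have hFG := hfull ▸ norm_gradient_mean_le univ hdiff hG.le hbdd
  have hBG := fun k => hbatch k ▸ norm_gradient_mean_le (B t k) hdiff hG.le hbdd
  have hBsmooth := fun k => hbatch k ▸ lipschitzWith_gradient_mean (B t k) hdiff hlip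
  have hloop := vradam_inner_loop_descent hFdiff hFsmooth hβ₁0 hβ₁1 hβ₂0 hβ₂1 hε (hα t).le
    (by positivity : 0 ≤ 3 * G) (hFG (wt t))
    (fun k hk => by
      rw [hg t ht k hk]
      refine (norm_add_le _ _).trans ?_
      linarith [norm_sub_le (gradient (batchLoss d N b f (B t k)) (w t k))
        (gradient (batchLoss d N b f (B t k)) (wt t)), hBG k (w t k), hBG k (wt t), hFG (wt t)])
    (fun k hk => by
      rw [hg t ht k hk, add_sub_cancel_right]
      exact (hBsmooth k).norm_sub_le _ _)
    (hw1 t ht) (hm0 t) (hv0 t) (hmrec t ht) (hvrec t ht) (hwrec t ht)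
  rw [hK] at hloop
  rw [hnext t ht]
  exact hloop.trans (vradam_inner_loop_bound_le hβ₁0 hβ₁1 hε (hα t).le hL.le (sq_nonneg _) m)

/-- Per-outer-iteration descent bound for VRADAM with resetting (Option A):
with `Q₈ = (1-β₁)/√(9G²+ε)` and `Q₉ = (3G²Lm(m-1)/(1-β₁)² + 9G²Lm²)/(2ε)`, for every
outer iteration `t ≥ 1`, every choice of mini-batches and every starting point,
`F(w̃_{t+1}) - F(w̃_t) ≤ -Q₈ α_t m ‖∇F(w̃_t)‖² + Q₉ α_t²`. -/
theorem vradam_descent_step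
    (d N b m : ℕ) (hN : 0 < N) (hb : 0 < b) (hm : 0 < m)
    (f : Fin N → EuclideanSpace ℝ (Fin d) → ℝ) (L G : ℝ) (hL : 0 < L) (hG : 0 < G)
    (hdiff : ∀ n, Differentiable ℝ (f n))
    (hlip : ∀ n, LipschitzWith (Real.toNNReal L) (gradient (f n)))
    (hbdd : ∀ n x, ‖gradient (f n) x‖ ≤ G)
    (β₁ β₂ ε : ℝ) (hβ₁0 : 0 ≤ β₁) (hβ₁1 : β₁ < 1) (hβ₂0 : 0 ≤ β₂) (hβ₂1 : β₂ < 1)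
    (hε : 0 < ε)
    (α : ℕ → ℝ) (hα : ∀ t, 0 < α t)
    (B : ℕ → ℕ → Finset (Fin N)) (hB : ∀ t k, (B t k).card = b)
    (wt : ℕ → EuclideanSpace ℝ (Fin d))
    (w mm v g : ℕ → ℕ → EuclideanSpace ℝ (Fin d))
    -- VRADAM inner loop with resetting (Option A)
    (hw1 : ∀ t : ℕ, 1 ≤ t → w t 1 = wt t)
    (hm0 : ∀ t, mm t 0 = 0) (hv0 : ∀ t, v t 0 = 0)
    (hg : ∀ t : ℕ, 1 ≤ t → ∀ k ∈ Finset.Icc 1 m,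
      g t k = gradient (batchLoss d N b f (B t k)) (w t k)
        - gradient (batchLoss d N b f (B t k)) (wt t)
        + gradient (fullLoss d N f) (wt t))
    (hmrec : ∀ t : ℕ, 1 ≤ t → ∀ k ∈ Finset.Icc 1 m,
      mm t k = β₁ • mm t (k - 1) + (1 - β₁) • g t k)
    (hvrec : ∀ t : ℕ, 1 ≤ t → ∀ k ∈ Finset.Icc 1 m, ∀ i,
      v t k i = β₂ * v t (k - 1) i + (1 - β₂) * (g t k i) ^ 2)
    (hwrec : ∀ t : ℕ, 1 ≤ t → ∀ k ∈ Finset.Icc 1 m, ∀ i,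
      w t (k + 1) i = w t k i -
        α t * (mm t k i / (1 - β₁ ^ k)) / Real.sqrt (v t k i / (1 - β₂ ^ k) + ε))
    (hnext : ∀ t : ℕ, 1 ≤ t → wt (t + 1) = w t (m + 1)) :
    ∀ t : ℕ, 1 ≤ t →
      fullLoss d N f (wt (t + 1)) - fullLoss d N f (wt t) ≤
        -((1 - β₁) / Real.sqrt (9 * G ^ 2 + ε)) * α t * m *
            ‖gradient (fullLoss d N f) (wt t)‖ ^ 2 +
          ((3 * G ^ 2 * L * m * (m - 1) / (1 - β₁) ^ 2 + 9 * G ^ 2 * L * m ^ 2) / (2 * ε)) *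
            (α t) ^ 2 :=
  vradam_descent_step_general d N b m f L G hL hG hdiff hlip hbdd β₁ β₂ ε hβ₁0 hβ₁1 hβ₂0 hβ₂1 hε α
    hα B hB wt w mm v g hw1 hm0 hv0 hg hmrec hvrec hwrec hnext
end
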